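/- Let (X1^i)_{i≥0} and (X2^i)_{i≥0} be two families of nonnegative real random variables, all mutually independent, with the X1^i identically distributed and the X2^i identically distributed. Let R > 0, d > 0, t ≥ d, n̂ = ⌈R(t-d)⌉, and define D1(n) = max_{0 ≤ v ≤ n} ( (n-v)/R + Σ_{i=0}^{v} X1^{n-i} ) and D2(n) = max_{0 ≤ v ≤ n} ( D1(n-v) + Σ_{i=0}^{v} X2^{n-i} ). Suppose s > 0 satisfies max(M1(s), M2(s)) < e^{s/R} with M1(s) = E[e^{s X1^0}], M2(s) = E[e^{s X2^0}] finite, and set βk(s) = Mk(s) e^{-s/R}. Then for every integer K ≥ 1, P( D2(n̂) > t ) ≤ Σ_{v0=0}^{K-1} Σ_{v1=0}^{K-1} P( Σ_{i=0}^{v1} X1^i + Σ_{i=0}^{v0} X2^i > d + (v0+v1-1)/R ) + e^{-s(d - 1/R)} M1(s) M2(s) · ( β1^K(s) + β2^K(s) - β1^K(s) β2^K(s) ) / ( (1 - β1(s))(1 - β2(s)) ). -/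

import Mathlib

/-!
Unfolding Reich's equations twice, packet `n̂` leaves after `t` only if, for some `v0 ≤ n̂` and
`v1 ≤ n̂ - v0`, the service times of the `v1 + 1` packets ending with `n̂ - v0` at node 1 and of
the `v0 + 1` packets ending with `n̂` at node 2 add up to more than `t` minus the arrival time
`(n̂ - v0 - v1) / R`; the choice `n̂ = ⌈R(t - d)⌉` turns this threshold into
`d + (v0 + v1 - 1) / R`. By independence and identical distribution each such shifted sum has
the law of the unshifted one, so the union bound gives the double sum of `Φ(v0, v1, R)` over a
triangle. Terms in the `K × K` block are kept; every other term is at most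
`e^{-s(d - 1/R)} M1 M2 β1^v1 β2^v0` by the Chernoff bound, and summing these over the
complement of the block gives the geometric tail.
-/

open MeasureTheory ProbabilityTheory

/-- Reich's (max-plus) equation: departure time of packet `n` from an FCFS queue with
arrival process `A` and service times `X`. -/
noncomputable def depart {Ω : Type*} (A : ℕ → Ω → ℝ) (X : ℕ → Ω → ℝ) (n : ℕ) (ω : Ω) : ℝ :=
  (Finset.range (n + 1)).sup' ⟨0, Finset.mem_range.mpr (Nat.succ_pos n)⟩
    (fun v => A (n - v) ω + ∑ i ∈ Finset.range (v + 1), X (n - i) ω)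

open Finset Real

theorem ProbabilityTheory.iIndepFun.identDistrib_sum_comp {Ω ι : Type*} [MeasurableSpace Ω]
    {μ : Measure Ω} [IsProbabilityMeasure μ] {Y : ι → Ω → ℝ} (hY : iIndepFun Y μ)
    (hmeas : ∀ i, Measurable (Y i)) {T : Finset ι} {g : ι → ι} (hg : Set.InjOn g T)
    (hlaw : ∀ j ∈ T, μ.map (Y (g j)) = μ.map (Y j)) :
    IdentDistrib (∑ j ∈ T, Y (g j)) (∑ j ∈ T, Y j) μ μ := by
  have hgT : iIndepFun (fun j : T => Y (g j)) μ :=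
    hY.precomp (g := fun j : T => g j) (Set.injOn_iff_injective.mp hg)
  have hT : iIndepFun (fun j : T => Y j) μ := hY.precomp Subtype.val_injective
  have hvec : IdentDistrib (fun ω (j : T) => Y (g j) ω) (fun ω (j : T) => Y j ω) μ μ :=
    { aemeasurable_fst := by fun_prop
      aemeasurable_snd := by fun_prop
      map_eq := by
        rw [hgT.map_fun_eq_pi_map (fun _ => (hmeas _).aemeasurable),
          hT.map_fun_eq_pi_map (fun _ => (hmeas _).aemeasurable)]
        exact congrArg Measure.pi (funext fun j => hlaw j j.2) }
  have hsum := hvec.comp (u := fun x : T → ℝ => ∑ j, x j) (by fun_prop)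
  convert hsum using 1 <;> ext ω <;> simp only [Finset.sum_apply, Function.comp_apply] <;>
    exact (sum_coe_sort T _).symm

theorem ProbabilityTheory.iIndepFun.measure_lt_sum_le {Ω ι : Type*} [MeasurableSpace Ω]
    {μ : Measure Ω} [IsProbabilityMeasure μ] {Y : ι → Ω → ℝ} (hY : iIndepFun Y μ)
    (hmeas : ∀ i, Measurable (Y i)) (T : Finset ι) {s : ℝ} (hs : 0 ≤ s)
    (hint : ∀ j ∈ T, Integrable (fun ω => exp (s * Y j ω)) μ) (c : ℝ) :
    μ {ω | c < ∑ j ∈ T, Y j ω} ≤ ENNReal.ofReal (exp (-s * c) * ∏ j ∈ T, mgf (Y j) μ s) := by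
  have hchernoff := measure_ge_le_exp_mul_mgf c hs (hY.integrable_exp_mul_sum hmeas hint)
  rw [hY.mgf_sum hmeas] at hchernoff
  calc μ {ω | c < ∑ j ∈ T, Y j ω} ≤ μ {ω | c ≤ (∑ j ∈ T, Y j) ω} :=
        measure_mono fun ω (h : c < ∑ j ∈ T, Y j ω) => by simpa using h.le
    _ ≤ _ := by
      rw [← ofReal_measureReal]
      exact ENNReal.ofReal_le_ofReal hchernoff

theorem exp_mul_pow_succ_mul_pow_succ (s d R M1 M2 : ℝ) (v0 v1 : ℕ) :
    exp (-s * (d + ((v0 : ℝ) + v1 - 1) / R)) * M1 ^ (v1 + 1) * M2 ^ (v0 + 1) =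
      exp (-s * (d - 1 / R)) * M1 * M2 *
        ((M1 * exp (-(s / R))) ^ v1 * (M2 * exp (-(s / R))) ^ v0) := by
  have hsplit : exp (-s * (d + ((v0 : ℝ) + v1 - 1) / R)) =
      exp (-s * (d - 1 / R)) * exp (-(s / R)) ^ v1 * exp (-(s / R)) ^ v0 := by
    rw [← exp_nat_mul, ← exp_nat_mul, ← exp_add, ← exp_add]
    congr 1
    ring
  rw [hsplit]
  ring

theorem sum_sdiff_range_product_geom_le {β γ : ℝ} (hβ0 : 0 ≤ β) (hβ1 : β < 1) (hγ0 : 0 ≤ γ)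
    (hγ1 : γ < 1) {K N : ℕ} (hKN : K ≤ N) :
    ∑ p ∈ range N ×ˢ range N \ range K ×ˢ range K, β ^ p.2 * γ ^ p.1 ≤
      (β ^ K + γ ^ K - β ^ K * γ ^ K) / ((1 - β) * (1 - γ)) := by
  have hprod (n : ℕ) : ∑ p ∈ range n ×ˢ range n, β ^ p.2 * γ ^ p.1 =
      (1 - β ^ n) * (1 - γ ^ n) / ((1 - β) * (1 - γ)) := by
    rw [sum_product, sum_comm, ← sum_mul_sum, geom_sum_eq hβ1.ne, geom_sum_eq hγ1.ne,
      div_mul_div_comm, div_eq_div_iff (by nlinarith) (by nlinarith)]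
    ring
  have hsub := product_subset_product (range_subset_range.mpr hKN) (range_subset_range.mpr hKN)
  rw [sum_sdiff_eq_sub hsub, hprod, hprod]
  have hden : 0 < (1 - β) * (1 - γ) := mul_pos (by linarith) (by linarith)
  rw [← sub_div, div_le_div_iff_of_pos_right hden]
  nlinarith [pow_nonneg hβ0 N, pow_nonneg hγ0 N, pow_le_one₀ hβ0 hβ1.le (n := N),
    pow_le_one₀ hγ0 hγ1.le (n := N)]

theorem sum_triangle_le_sum_block_add_geom_tail {f : ℕ → ℕ → ENNReal} {C β γ : ℝ} (hC : 0 ≤ C)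
    (hβ0 : 0 ≤ β) (hβ1 : β < 1) (hγ0 : 0 ≤ γ) (hγ1 : γ < 1)
    (hf : ∀ a b, f a b ≤ ENNReal.ofReal (C * (β ^ b * γ ^ a))) (n K : ℕ) :
    ∑ a ∈ range (n + 1), ∑ b ∈ range (n - a + 1), f a b ≤
      ∑ a ∈ range K, ∑ b ∈ range K, f a b +
        ENNReal.ofReal (C * ((β ^ K + γ ^ K - β ^ K * γ ^ K) / ((1 - β) * (1 - γ)))) := by
  set N := max (n + 1) K
  have hKN : K ≤ N := le_max_right _ _
  have hsub := product_subset_product (range_subset_range.mpr hKN) (range_subset_range.mpr hKN)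
  have htail : ∑ p ∈ range N ×ˢ range N \ range K ×ˢ range K, f p.1 p.2 ≤
      ENNReal.ofReal (C * ((β ^ K + γ ^ K - β ^ K * γ ^ K) / ((1 - β) * (1 - γ)))) := calc
    _ ≤ ∑ p ∈ range N ×ˢ range N \ range K ×ˢ range K,
          ENNReal.ofReal (C * (β ^ p.2 * γ ^ p.1)) :=
      sum_le_sum fun p _ => hf p.1 p.2
    _ = ENNReal.ofReal
          (C * ∑ p ∈ range N ×ˢ range N \ range K ×ˢ range K, β ^ p.2 * γ ^ p.1) := by
      rw [mul_sum, ENNReal.ofReal_sum_of_nonneg fun p _ => by positivity]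
    _ ≤ _ := ENNReal.ofReal_le_ofReal <| mul_le_mul_of_nonneg_left
      (sum_sdiff_range_product_geom_le hβ0 hβ1 hγ0 hγ1 hKN) hC
  calc ∑ a ∈ range (n + 1), ∑ b ∈ range (n - a + 1), f a b
      ≤ ∑ a ∈ range N, ∑ b ∈ range N, f a b :=
        (sum_le_sum fun a _ => sum_le_sum_of_subset (range_subset_range.mpr (by omega))).trans
          (sum_le_sum_of_subset (range_subset_range.mpr (le_max_left _ _)))
    _ = ∑ a ∈ range K, ∑ b ∈ range K, f a b +
          ∑ p ∈ range N ×ˢ range N \ range K ×ˢ range K, f p.1 p.2 := by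
      rw [← sum_product' (f := f), ← sum_product' (f := f), ← sum_sdiff hsub, add_comm]
    _ ≤ _ := by gcongr

theorem lt_depart_iff {Ω : Type*} {A X : ℕ → Ω → ℝ} {n : ℕ} {ω : Ω} {t : ℝ} :
    t < depart A X n ω ↔ ∃ v ≤ n, t < A (n - v) ω + ∑ i ∈ range (v + 1), X (n - i) ω := by
  refine (lt_sup'_iff (H := _)).trans ?_
  simp only [mem_range, Nat.lt_succ_iff]

theorem lt_depart_depart_iff {Ω : Type*} {A X1 X2 : ℕ → Ω → ℝ} {n : ℕ} {ω : Ω} {t : ℝ} :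
    t < depart (depart A X1) X2 n ω ↔ ∃ v0 ≤ n, ∃ v1 ≤ n - v0,
      t < A (n - v0 - v1) ω + ∑ i ∈ range (v1 + 1), X1 (n - v0 - i) ω +
        ∑ i ∈ range (v0 + 1), X2 (n - i) ω := by
  simp only [lt_depart_iff (A := depart A X1), ← sub_lt_iff_lt_add, lt_depart_iff]

theorem natCast_sub_div_lt_of_le_ceil {R d t : ℝ} (hR : 0 < R) (ht : d ≤ t) {v : ℕ}
    (hv : v ≤ ⌈R * (t - d)⌉₊) :
    ((⌈R * (t - d)⌉₊ - v : ℕ) : ℝ) / R < t - d - ((v : ℝ) - 1) / R := by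
  have hceil : (⌈R * (t - d)⌉₊ : ℝ) < R * (t - d) + 1 :=
    Nat.ceil_lt_add_one (mul_nonneg hR.le (sub_nonneg.mpr ht))
  rw [Nat.cast_sub hv, div_lt_iff₀ hR]
  have : (t - d - ((v : ℝ) - 1) / R) * R = R * (t - d) + 1 - v := by field_simp; ring
  linarith

theorem setOf_lt_depart_depart_subset {Ω : Type*} {X1 X2 : ℕ → Ω → ℝ} {R d t : ℝ} (hR : 0 < R)
    (ht : d ≤ t) :
    {ω | t < depart (depart (fun n _ => (n : ℝ) / R) X1) X2 ⌈R * (t - d)⌉₊ ω} ⊆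
      ⋃ v0 ∈ range (⌈R * (t - d)⌉₊ + 1), ⋃ v1 ∈ range (⌈R * (t - d)⌉₊ - v0 + 1),
        {ω | d + ((v0 : ℝ) + v1 - 1) / R <
          ∑ i ∈ range (v1 + 1), X1 (⌈R * (t - d)⌉₊ - v0 - i) ω +
            ∑ i ∈ range (v0 + 1), X2 (⌈R * (t - d)⌉₊ - i) ω} := by
  intro ω hω
  obtain ⟨v0, hv0, v1, hv1, hlt⟩ := lt_depart_depart_iff.mp hω
  have harrival := natCast_sub_div_lt_of_le_ceil hR ht (v := v0 + v1) (by omega)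
  rw [Nat.sub_sub] at hlt
  push_cast at harrival
  simp only [Set.mem_iUnion, mem_range, Set.mem_ofPred_eq]
  exact ⟨v0, by omega, v1, by omega, by linarith⟩

section TwoFamilies

variable {Ω : Type*} [MeasurableSpace Ω] {μ : Measure Ω} [IsProbabilityMeasure μ]
  {X1 X2 : ℕ → Ω → ℝ}

theorem measure_lt_sum_add_sum_comp_eq (hindep : iIndepFun (Sum.elim X1 X2) μ)
    (hmeas1 : ∀ i, Measurable (X1 i)) (hmeas2 : ∀ i, Measurable (X2 i))
    (hident1 : ∀ i, μ.map (X1 i) = μ.map (X1 0)) (hident2 : ∀ i, μ.map (X2 i) = μ.map (X2 0))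
    {v0 v1 : ℕ} {f1 f2 : ℕ → ℕ} (hf1 : Set.InjOn f1 (range (v1 + 1)))
    (hf2 : Set.InjOn f2 (range (v0 + 1))) (c : ℝ) :
    μ {ω | c < ∑ i ∈ range (v1 + 1), X1 (f1 i) ω + ∑ i ∈ range (v0 + 1), X2 (f2 i) ω} =
      μ {ω | c < ∑ i ∈ range (v1 + 1), X1 i ω + ∑ i ∈ range (v0 + 1), X2 i ω} := by
  have hinj : Set.InjOn (Sum.map f1 f2) ((range (v1 + 1)).disjSum (range (v0 + 1))) := by
    rintro (x | x) hx (y | y) hy h <;> simp_all [hf1.eq_iff, hf2.eq_iff]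
  have hlaw := (hindep.identDistrib_sum_comp (fun j => by cases j <;> simp [*]) hinj
    (by rintro (i | i) _ <;> simp [hident1, hident2])).measure_mem_eq (measurableSet_Ioi (a := c))
  simpa [Set.preimage, sum_disjSum] using hlaw

theorem measure_lt_sum_add_sum_le (hindep : iIndepFun (Sum.elim X1 X2) μ)
    (hmeas1 : ∀ i, Measurable (X1 i)) (hmeas2 : ∀ i, Measurable (X2 i))
    (hident1 : ∀ i, μ.map (X1 i) = μ.map (X1 0)) (hident2 : ∀ i, μ.map (X2 i) = μ.map (X2 0))
    {s : ℝ} (hs : 0 ≤ s) (hint1 : Integrable (fun ω => exp (s * X1 0 ω)) μ)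
    (hint2 : Integrable (fun ω => exp (s * X2 0 ω)) μ) (v0 v1 : ℕ) (c : ℝ) :
    μ {ω | c < ∑ i ∈ range (v1 + 1), X1 i ω + ∑ i ∈ range (v0 + 1), X2 i ω} ≤
      ENNReal.ofReal (exp (-s * c) * mgf (X1 0) μ s ^ (v1 + 1) * mgf (X2 0) μ s ^ (v0 + 1)) := by
  have hid1 (i : ℕ) : IdentDistrib (X1 i) (X1 0) μ μ :=
    ⟨(hmeas1 i).aemeasurable, (hmeas1 0).aemeasurable, hident1 i⟩
  have hid2 (i : ℕ) : IdentDistrib (X2 i) (X2 0) μ μ :=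
    ⟨(hmeas2 i).aemeasurable, (hmeas2 0).aemeasurable, hident2 i⟩
  have hexp : Measurable fun x : ℝ => exp (s * x) := by fun_prop
  have hint : ∀ j ∈ (range (v1 + 1)).disjSum (range (v0 + 1)),
      Integrable (fun ω => exp (s * Sum.elim X1 X2 j ω)) μ := by
    rintro (i | i) _
    · exact ((hid1 i).comp hexp).integrable_iff.mpr hint1
    · exact ((hid2 i).comp hexp).integrable_iff.mpr hint2
  have hchernoff := hindep.measure_lt_sum_le (fun j => by cases j <;> simp [*]) _ hs hint c
  simp only [sum_disjSum, prod_disjSum, Sum.elim_inl, Sum.elim_inr,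
    fun i => mgf_congr_identDistrib (hid1 i), fun i => mgf_congr_identDistrib (hid2 i),
    prod_const, card_range] at hchernoff
  rwa [mul_assoc]

theorem measure_lt_depart_depart_le {R d t : ℝ} (hindep : iIndepFun (Sum.elim X1 X2) μ)
    (hmeas1 : ∀ i, Measurable (X1 i)) (hmeas2 : ∀ i, Measurable (X2 i))
    (hident1 : ∀ i, μ.map (X1 i) = μ.map (X1 0)) (hident2 : ∀ i, μ.map (X2 i) = μ.map (X2 0))
    (hR : 0 < R) (ht : d ≤ t) :
    μ {ω | t < depart (depart (fun n _ => (n : ℝ) / R) X1) X2 ⌈R * (t - d)⌉₊ ω} ≤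
      ∑ v0 ∈ range (⌈R * (t - d)⌉₊ + 1), ∑ v1 ∈ range (⌈R * (t - d)⌉₊ - v0 + 1),
        μ {ω | d + ((v0 : ℝ) + v1 - 1) / R <
          ∑ i ∈ range (v1 + 1), X1 i ω + ∑ i ∈ range (v0 + 1), X2 i ω} := calc
  _ ≤ ∑ v0 ∈ range (⌈R * (t - d)⌉₊ + 1), ∑ v1 ∈ range (⌈R * (t - d)⌉₊ - v0 + 1),
        μ {ω | d + ((v0 : ℝ) + v1 - 1) / R <
          ∑ i ∈ range (v1 + 1), X1 (⌈R * (t - d)⌉₊ - v0 - i) ω +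
            ∑ i ∈ range (v0 + 1), X2 (⌈R * (t - d)⌉₊ - i) ω} :=
      (measure_mono (setOf_lt_depart_depart_subset hR ht)).trans <|
        (measure_biUnion_finset_le _ _).trans <|
          sum_le_sum fun _ _ => measure_biUnion_finset_le _ _
  _ = _ := by
      refine sum_congr rfl fun v0 hv0 => sum_congr rfl fun v1 hv1 => ?_
      simp only [mem_range] at hv0 hv1
      refine measure_lt_sum_add_sum_comp_eq hindep hmeas1 hmeas2 hident1 hident2 ?_ ?_ _ <;>
        intro x hx y hy hxy <;> simp only [coe_range, Set.mem_Iio] at hx hy <;> omega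

end TwoFamilies

theorem stmt17_general {Ω : Type*} [MeasurableSpace Ω] (μ : Measure Ω) [IsProbabilityMeasure μ]
    (X1 X2 : ℕ → Ω → ℝ)
    (hmeas1 : ∀ i, Measurable (X1 i)) (hmeas2 : ∀ i, Measurable (X2 i))
    (hindep : iIndepFun (Sum.elim X1 X2 : ℕ ⊕ ℕ → Ω → ℝ) μ)
    (hident1 : ∀ i, μ.map (X1 i) = μ.map (X1 0))
    (hident2 : ∀ i, μ.map (X2 i) = μ.map (X2 0))
    (R d t s : ℝ) (hR : 0 < R) (ht : d ≤ t) (hs : 0 < s)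
    (hint1 : Integrable (fun ω => Real.exp (s * X1 0 ω)) μ)
    (hint2 : Integrable (fun ω => Real.exp (s * X2 0 ω)) μ)
    (hlt : max (∫ ω, Real.exp (s * X1 0 ω) ∂μ) (∫ ω, Real.exp (s * X2 0 ω) ∂μ) <
      Real.exp (s / R))
    (K : ℕ) :
    μ {ω | t < depart (depart (fun n _ => (n : ℝ) / R) X1) X2 ⌈R * (t - d)⌉₊ ω} ≤
      (∑ v0 ∈ Finset.range K, ∑ v1 ∈ Finset.range K,
        μ {ω | d + ((v0 : ℝ) + (v1 : ℝ) - 1) / R <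
          (∑ i ∈ Finset.range (v1 + 1), X1 i ω) +
          (∑ i ∈ Finset.range (v0 + 1), X2 i ω)}) +
      ENNReal.ofReal (Real.exp (-s * (d - 1 / R)) *
        (∫ ω, Real.exp (s * X1 0 ω) ∂μ) * (∫ ω, Real.exp (s * X2 0 ω) ∂μ) *
        ((((∫ ω, Real.exp (s * X1 0 ω) ∂μ) * Real.exp (-(s / R))) ^ K +
          ((∫ ω, Real.exp (s * X2 0 ω) ∂μ) * Real.exp (-(s / R))) ^ K -
          ((∫ ω, Real.exp (s * X1 0 ω) ∂μ) * Real.exp (-(s / R))) ^ K *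
          ((∫ ω, Real.exp (s * X2 0 ω) ∂μ) * Real.exp (-(s / R))) ^ K) /
         ((1 - (∫ ω, Real.exp (s * X1 0 ω) ∂μ) * Real.exp (-(s / R))) *
          (1 - (∫ ω, Real.exp (s * X2 0 ω) ∂μ) * Real.exp (-(s / R)))))) := by
  have hM1 := integral_exp_pos hint1
  have hM2 := integral_exp_pos hint2
  have hβ {M : ℝ} (hM : M < exp (s / R)) : M * exp (-(s / R)) < 1 := by
    rwa [exp_neg, ← div_eq_mul_inv, div_lt_one (exp_pos _)]
  refine (measure_lt_depart_depart_le hindep hmeas1 hmeas2 hident1 hident2 hR ht).trans <|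
    sum_triangle_le_sum_block_add_geom_tail (by positivity) (by positivity)
      (hβ (max_lt_iff.mp hlt).1) (by positivity) (hβ (max_lt_iff.mp hlt).2) (fun v0 v1 => ?_) _ _
  exact (measure_lt_sum_add_sum_le hindep hmeas1 hmeas2 hident1 hident2 hs.le hint1 hint2 v0 v1
    _).trans_eq (congrArg _ (exp_mul_pow_succ_mul_pow_succ ..))

/-- The two-hop α-relaxed upper bound: the `K × K` leading block of the union-bound double sum
is kept exactly and the tail regions are bounded via Chernoff bounds, giving
`P(D₂(n̂) > t) ≤ Σ_{v0<K} Σ_{v1<K} Φ(v0,v1,R)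
  + e^{-s(d-1/R)} M1(s) M2(s) (β1^K + β2^K - β1^K β2^K) / ((1-β1)(1-β2))`. -/
theorem stmt17 {Ω : Type*} [MeasurableSpace Ω] (μ : Measure Ω) [IsProbabilityMeasure μ]
    (X1 X2 : ℕ → Ω → ℝ)
    (hmeas1 : ∀ i, Measurable (X1 i)) (hmeas2 : ∀ i, Measurable (X2 i))
    (hnn1 : ∀ i ω, 0 ≤ X1 i ω) (hnn2 : ∀ i ω, 0 ≤ X2 i ω)
    (hindep : iIndepFun (Sum.elim X1 X2 : ℕ ⊕ ℕ → Ω → ℝ) μ)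
    (hident1 : ∀ i, μ.map (X1 i) = μ.map (X1 0))
    (hident2 : ∀ i, μ.map (X2 i) = μ.map (X2 0))
    (R d t s : ℝ) (hR : 0 < R) (hd : 0 < d) (ht : d ≤ t) (hs : 0 < s)
    (hint1 : Integrable (fun ω => Real.exp (s * X1 0 ω)) μ)
    (hint2 : Integrable (fun ω => Real.exp (s * X2 0 ω)) μ)
    (hlt : max (∫ ω, Real.exp (s * X1 0 ω) ∂μ) (∫ ω, Real.exp (s * X2 0 ω) ∂μ) <
      Real.exp (s / R))
    (K : ℕ) (hK : 1 ≤ K) :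
    μ {ω | t < depart (depart (fun n _ => (n : ℝ) / R) X1) X2 ⌈R * (t - d)⌉₊ ω} ≤
      (∑ v0 ∈ Finset.range K, ∑ v1 ∈ Finset.range K,
        μ {ω | d + ((v0 : ℝ) + (v1 : ℝ) - 1) / R <
          (∑ i ∈ Finset.range (v1 + 1), X1 i ω) +
          (∑ i ∈ Finset.range (v0 + 1), X2 i ω)}) +
      ENNReal.ofReal (Real.exp (-s * (d - 1 / R)) *
        (∫ ω, Real.exp (s * X1 0 ω) ∂μ) * (∫ ω, Real.exp (s * X2 0 ω) ∂μ) *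
        ((((∫ ω, Real.exp (s * X1 0 ω) ∂μ) * Real.exp (-(s / R))) ^ K +
          ((∫ ω, Real.exp (s * X2 0 ω) ∂μ) * Real.exp (-(s / R))) ^ K -
          ((∫ ω, Real.exp (s * X1 0 ω) ∂μ) * Real.exp (-(s / R))) ^ K *
          ((∫ ω, Real.exp (s * X2 0 ω) ∂μ) * Real.exp (-(s / R))) ^ K) /
         ((1 - (∫ ω, Real.exp (s * X1 0 ω) ∂μ) * Real.exp (-(s / R))) *
          (1 - (∫ ω, Real.exp (s * X2 0 ω) ∂μ) * Real.exp (-(s / R)))))) :=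
  stmt17_general μ X1 X2 hmeas1 hmeas2 hindep hident1 hident2 R d t s hR ht hs hint1 hint2 hlt K
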